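/- Let H = P ⊗ Q where P ∈ ℝ^{m×m} and Q ∈ ℝ^{n×n} are symmetric, and let U ∈ ℝ^{m×r}, V ∈ ℝ^{n×r} have orthonormal columns. Then the quadratic form vec(U V^T)^T H vec(U V^T) equals trace((U^T P U)(V^T Q V)) and is bounded above by Σ_{i=1}^r σ_{p,i} σ_{q,i}, where σ_{p,1} ≥ … ≥ σ_{p,m} and σ_{q,1} ≥ … ≥ σ_{q,n} are the singular values of P and Q respectively. -/

import Mathlib

/-!
Diagonalize `P = W diag(λ) Wᵀ`, `Q = Z diag(μ) Zᵀ` and put `M = (Wᵀ U)(Zᵀ V)ᵀ`. The quadratic form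
is `trace((Uᵀ P U)(Vᵀ Q V)) = ∑ i j, λᵢ μⱼ Mᵢⱼ²`, and as `Wᵀ U` and `Zᵀ V` have orthonormal
columns, the weights `Mᵢⱼ²` have row and column sums at most `1` and total mass `r`. The numbers
`|λᵢ|`, `|μⱼ|` are the singular values, so it remains to see that for decreasing nonnegative `a`,
`b` such weights `c` give `∑ i j, aᵢ bⱼ cᵢⱼ ≤ ∑ t < r, aₜ bₜ`. By Abel summation in both indices it
suffices to compare the corner sums `∑ i ≤ k, ∑ j ≤ l`: they are at most `min (k + 1) (l + 1) r`,
which are exactly the corner sums of the partial identity of rank `r`.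
-/

open scoped BigOperators Kronecker
open Matrix

/-- The (unsorted) singular values of a real matrix: the square roots of the
eigenvalues of `Aᴴ * A`. -/
noncomputable def singVals {m n : ℕ} (A : Matrix (Fin m) (Fin n) ℝ) :
    Fin n → ℝ :=
  fun j => Real.sqrt ((Matrix.isHermitian_conjTranspose_mul_self A).eigenvalues j)

/-- Row-wise vectorization of a matrix. -/
def vecr {m n : ℕ} (A : Matrix (Fin m) (Fin n) ℝ) : Fin m × Fin n → ℝ :=
  fun p => A p.1 p.2

open Finset Polynomial

section PrefixSums

theorem Finset.sum_mul_le_sum_mul_of_prefix_sum_le {ι : Type*} [LinearOrder ι] (s : Finset ι)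
    {a w v : ι → ℝ} (ha : AntitoneOn a s) (ha0 : ∀ i ∈ s, 0 ≤ a i)
    (h : ∀ k ∈ s, ∑ i ∈ s with i ≤ k, w i ≤ ∑ i ∈ s with i ≤ k, v i) :
    ∑ i ∈ s, a i * w i ≤ ∑ i ∈ s, a i * v i := by
  induction s using Finset.induction_on_max generalizing a with
  | empty => simp
  | insert x t hlt ih =>
    have hx : x ∉ t := fun hx => lt_irrefl x (hlt x hx)
    have hax : ∀ i ∈ t, a x ≤ a i := fun i hi =>
      ha (mem_insert_of_mem hi) (mem_insert_self x t) (hlt i hi).le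
    -- write `a = (a - a x) + a x`: the first part vanishes at the maximum `x`, the second is constant
    have htail : ∑ i ∈ t, (a i - a x) * w i ≤ ∑ i ∈ t, (a i - a x) * v i := by
      refine ih (fun i hi j hj hij => ?_) (fun i hi => sub_nonneg.2 (hax i hi)) fun k hk => ?_
      · exact sub_le_sub_right (ha (mem_insert_of_mem hi) (mem_insert_of_mem hj) hij) _
      · have hfilter : (insert x t).filter (· ≤ k) = t.filter (· ≤ k) := by
          rw [filter_insert, if_neg (not_le.2 (hlt k hk))]
        simpa only [hfilter] using h k (mem_insert_of_mem hk)
    have hfull : a x * ∑ i ∈ insert x t, w i ≤ a x * ∑ i ∈ insert x t, v i := by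
      have hfilter : (insert x t).filter (· ≤ x) = insert x t :=
        filter_true_of_mem fun i hi => (mem_insert.1 hi).elim le_of_eq fun hi => (hlt i hi).le
      refine mul_le_mul_of_nonneg_left ?_ (ha0 x (mem_insert_self x t))
      simpa only [hfilter] using h x (mem_insert_self x t)
    have hsplit : ∀ u : ι → ℝ, ∑ i ∈ insert x t, a i * u i
        = ∑ i ∈ t, (a i - a x) * u i + a x * ∑ i ∈ insert x t, u i := by
      intro u
      simp only [sum_insert hx, sub_mul, sum_sub_distrib, mul_add, mul_sum]
      ring
    rw [hsplit w, hsplit v]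
    exact add_le_add htail hfull

def cornerSum {ι κ : Type*} [LinearOrder ι] [LinearOrder κ] [Fintype ι] [Fintype κ]
    (c : ι → κ → ℝ) (k : ι) (l : κ) : ℝ :=
  ∑ i with i ≤ k, ∑ j with j ≤ l, c i j

theorem sum_sum_mul_mul_le_of_cornerSum_le {ι κ : Type*} [LinearOrder ι] [LinearOrder κ]
    [Fintype ι] [Fintype κ] {a : ι → ℝ} {b : κ → ℝ} (ha : Antitone a) (ha0 : ∀ i, 0 ≤ a i)
    (hb : Antitone b) (hb0 : ∀ j, 0 ≤ b j) {c c' : ι → κ → ℝ}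
    (h : ∀ k l, cornerSum c k l ≤ cornerSum c' k l) :
    ∑ i, ∑ j, a i * b j * c i j ≤ ∑ i, ∑ j, a i * b j * c' i j := by
  simp only [mul_assoc, ← mul_sum]
  refine univ.sum_mul_le_sum_mul_of_prefix_sum_le (ha.antitoneOn _) (fun i _ => ha0 i)
    fun k _ => ?_
  rw [sum_comm, sum_comm (s := univ.filter (· ≤ k))]
  simp only [← mul_sum]
  refine univ.sum_mul_le_sum_mul_of_prefix_sum_le (hb.antitoneOn _) (fun j _ => hb0 j)
    fun l _ => ?_
  rw [sum_comm, sum_comm (s := univ.filter (· ≤ l))]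
  exact h k l

end PrefixSums

section Substochastic

variable {m n r : ℕ}

theorem cornerSum_le_of_sum_le_one {c : Fin m → Fin n → ℝ} (hc0 : ∀ i j, 0 ≤ c i j)
    (hrow : ∀ i, ∑ j, c i j ≤ 1) (k : Fin m) (l : Fin n) :
    cornerSum c k l ≤ (k : ℕ) + 1 := by
  calc cornerSum c k l ≤ ∑ i with i ≤ k, (1 : ℝ) := sum_le_sum fun i _ =>
        (sum_le_sum_of_subset_of_nonneg (filter_subset _ _) fun j _ _ => hc0 i j).trans (hrow i)
    _ = (k : ℕ) + 1 := by simp [filter_ge_eq_Iic, Fin.card_Iic]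

theorem cornerSum_le_sum_sum {c : Fin m → Fin n → ℝ} (hc0 : ∀ i j, 0 ≤ c i j)
    (k : Fin m) (l : Fin n) : cornerSum c k l ≤ ∑ i, ∑ j, c i j :=
  (sum_le_sum fun i _ => sum_le_sum_of_subset_of_nonneg (filter_subset _ _)
    fun j _ _ => hc0 i j).trans <|
      sum_le_sum_of_subset_of_nonneg (filter_subset _ _) fun i _ _ => sum_nonneg fun j _ => hc0 i j

def partialIdentity (hrm : r ≤ m) (hrn : r ≤ n) : Fin m → Fin n → ℝ := fun i j =>
  ∑ t : Fin r, if i = Fin.castLE hrm t ∧ j = Fin.castLE hrn t then 1 else 0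

theorem sum_sum_mul_mul_partialIdentity (hrm : r ≤ m) (hrn : r ≤ n) (a : Fin m → ℝ)
    (b : Fin n → ℝ) : ∑ i, ∑ j, a i * b j * partialIdentity hrm hrn i j
      = ∑ t : Fin r, a (Fin.castLE hrm t) * b (Fin.castLE hrn t) := by
  simp only [partialIdentity, mul_sum, mul_ite, mul_one, mul_zero, ite_and]
  rw [sum_comm_cycle]
  simp

theorem cornerSum_partialIdentity (hrm : r ≤ m) (hrn : r ≤ n) (k : Fin m) (l : Fin n) :
    cornerSum (partialIdentity hrm hrn) k l = (min r (min (k : ℕ) l + 1) : ℕ) := by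
  simp only [cornerSum, partialIdentity]
  rw [sum_comm_cycle]
  simp only [ite_and, sum_ite_irrel, sum_const_zero, sum_ite_eq', mem_filter,
    mem_univ, true_and]
  simp only [← ite_and, sum_boole]
  have hfilter : univ.filter (fun t : Fin r => Fin.castLE hrm t ≤ k ∧ Fin.castLE hrn t ≤ l)
      = univ.filter (fun t : Fin r => (t : ℕ) < min (k : ℕ) l + 1) := by
    ext t
    simp only [mem_filter, mem_univ, true_and, Fin.le_def, Fin.val_castLE]
    omega
  rw [hfilter, Fin.card_filter_val_lt]

theorem cornerSum_le_cornerSum_partialIdentity (hrm : r ≤ m) (hrn : r ≤ n)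
    {c : Fin m → Fin n → ℝ} (hc0 : ∀ i j, 0 ≤ c i j) (hrow : ∀ i, ∑ j, c i j ≤ 1)
    (hcol : ∀ j, ∑ i, c i j ≤ 1) (htot : ∑ i, ∑ j, c i j ≤ r) (k : Fin m) (l : Fin n) :
    cornerSum c k l ≤ cornerSum (partialIdentity hrm hrn) k l := by
  have hk := cornerSum_le_of_sum_le_one hc0 hrow k l
  have hl : cornerSum c k l ≤ (l : ℕ) + 1 := by
    rw [cornerSum, sum_comm]
    exact cornerSum_le_of_sum_le_one (fun j i => hc0 i j) hcol l k
  have hr := (cornerSum_le_sum_sum hc0 k l).trans htot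
  rw [cornerSum_partialIdentity, Nat.cast_min, Nat.cast_add_one, Nat.cast_min,
    ← min_add_add_right]
  exact le_min hr (le_min hk hl)

theorem sum_sum_mul_mul_le_of_substochastic (hrm : r ≤ m) (hrn : r ≤ n)
    {a : Fin m → ℝ} {b : Fin n → ℝ} (ha : Antitone a) (ha0 : ∀ i, 0 ≤ a i)
    (hb : Antitone b) (hb0 : ∀ j, 0 ≤ b j) {c : Fin m → Fin n → ℝ} (hc0 : ∀ i j, 0 ≤ c i j)
    (hrow : ∀ i, ∑ j, c i j ≤ 1) (hcol : ∀ j, ∑ i, c i j ≤ 1) (htot : ∑ i, ∑ j, c i j ≤ r) :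
    ∑ i, ∑ j, a i * b j * c i j ≤ ∑ t : Fin r, a (Fin.castLE hrm t) * b (Fin.castLE hrn t) := by
  rw [← sum_sum_mul_mul_partialIdentity hrm hrn]
  exact sum_sum_mul_mul_le_of_cornerSum_le ha ha0 hb hb0
    (cornerSum_le_cornerSum_partialIdentity hrm hrn hc0 hrow hcol htot)

theorem sum_sum_mul_mul_le_of_substochastic_of_abs_eq (hrm : r ≤ m) (hrn : r ≤ n)
    {a : Fin m → ℝ} {b : Fin n → ℝ} (ha : Antitone a) (hb : Antitone b) {x : Fin m → ℝ}
    {y : Fin n → ℝ} (e : Equiv.Perm (Fin m)) (f : Equiv.Perm (Fin n))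
    (hx : ∀ i, |x i| = a (e i)) (hy : ∀ j, |y j| = b (f j)) {c : Fin m → Fin n → ℝ}
    (hc0 : ∀ i j, 0 ≤ c i j) (hrow : ∀ i, ∑ j, c i j ≤ 1) (hcol : ∀ j, ∑ i, c i j ≤ 1)
    (htot : ∑ i, ∑ j, c i j ≤ r) :
    ∑ i, ∑ j, x i * y j * c i j ≤ ∑ t : Fin r, a (Fin.castLE hrm t) * b (Fin.castLE hrn t) := by
  have ha0 : ∀ i, 0 ≤ a i := fun i => by simpa [hx] using abs_nonneg (x (e.symm i))
  have hb0 : ∀ j, 0 ≤ b j := fun j => by simpa [hy] using abs_nonneg (y (f.symm j))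
  have hsum : ∀ (e' : Equiv.Perm (Fin m)) (f' : Equiv.Perm (Fin n)) (g : Fin m → Fin n → ℝ),
      ∑ i, ∑ j, g (e' i) (f' j) = ∑ i, ∑ j, g i j := fun e' f' g => by
    rw [Equiv.sum_comp e' fun i => ∑ j, g i (f' j)]
    exact sum_congr rfl fun i _ => Equiv.sum_comp f' (g i)
  calc ∑ i, ∑ j, x i * y j * c i j ≤ ∑ i, ∑ j, |x i| * |y j| * c i j :=
        sum_le_sum fun i _ => sum_le_sum fun j _ => mul_le_mul_of_nonneg_right
          ((le_abs_self _).trans_eq (abs_mul _ _)) (hc0 i j)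
    _ = ∑ i, ∑ j, a i * b j * c (e.symm i) (f.symm j) := by
        rw [← hsum e f fun i j => a i * b j * c (e.symm i) (f.symm j)]
        simp only [hx, hy, Equiv.symm_apply_apply]
    _ ≤ _ := sum_sum_mul_mul_le_of_substochastic hrm hrn ha ha0 hb hb0 (fun _ _ => hc0 _ _)
        (fun i => (Equiv.sum_comp f.symm (c _)).trans_le (hrow _))
        (fun j => (Equiv.sum_comp e.symm (c · _)).trans_le (hcol _))
        ((hsum e.symm f.symm c).trans_le htot)

end Substochastic

section OrthonormalFrames

theorem Matrix.sum_sq_apply_eq_mul_transpose_apply {m n : Type*} [Fintype n]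
    (M : Matrix m n ℝ) (i : m) : ∑ j, M i j ^ 2 = (M * Mᵀ) i i := by
  simp [mul_apply, sq]

theorem Matrix.mul_transpose_apply_self_le_one {m r : Type*} [Fintype m] [Fintype r]
    [DecidableEq r] {A : Matrix m r ℝ} (hA : Aᵀ * A = 1) (i : m) : (A * Aᵀ) i i ≤ 1 := by
  set E := A * Aᵀ
  have hE : E * E = E := by
    simp only [E, Matrix.mul_assoc, ← Matrix.mul_assoc Aᵀ, hA, Matrix.one_mul]
  have hsq : E i i ^ 2 ≤ E i i :=
    calc E i i ^ 2 ≤ ∑ k, E i k ^ 2 := single_le_sum (fun k _ => sq_nonneg (E i k)) (mem_univ i)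
      _ = E i i := by
        rw [sum_sq_apply_eq_mul_transpose_apply, show Eᵀ = E by simp [E, transpose_mul], hE]
  nlinarith

theorem Matrix.transpose_mul_self_transpose_mul_eq_one {m p r : Type*} [Fintype m] [Fintype p]
    [DecidableEq m] [DecidableEq r] {W : Matrix m p ℝ} {U : Matrix m r ℝ} (hW : W * Wᵀ = 1)
    (hU : Uᵀ * U = 1) : (Wᵀ * U)ᵀ * (Wᵀ * U) = 1 := by
  rw [transpose_mul, transpose_transpose, Matrix.mul_assoc, ← Matrix.mul_assoc W, hW,
    Matrix.one_mul, hU]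

theorem Matrix.sum_row_sq_mul_transpose_le_one {m n r : Type*} [Fintype m] [Fintype n]
    [Fintype r] [DecidableEq r] {A : Matrix m r ℝ} {B : Matrix n r ℝ} (hA : Aᵀ * A = 1)
    (hB : Bᵀ * B = 1) (i : m) : ∑ j, ((A * Bᵀ) i j) ^ 2 ≤ 1 := by
  rw [sum_sq_apply_eq_mul_transpose_apply, transpose_mul, transpose_transpose, Matrix.mul_assoc,
    ← Matrix.mul_assoc Bᵀ, hB, Matrix.one_mul]
  exact mul_transpose_apply_self_le_one hA i

theorem Matrix.sum_col_sq_mul_transpose_le_one {m n r : Type*} [Fintype m] [Fintype n]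
    [Fintype r] [DecidableEq r] {A : Matrix m r ℝ} {B : Matrix n r ℝ} (hA : Aᵀ * A = 1)
    (hB : Bᵀ * B = 1) (j : n) : ∑ i, ((A * Bᵀ) i j) ^ 2 ≤ 1 := by
  simpa only [← transpose_apply (A * Bᵀ), transpose_mul, transpose_transpose]
    using sum_row_sq_mul_transpose_le_one hB hA j

theorem Matrix.sum_sum_sq_mul_transpose {m n r : Type*} [Fintype m] [Fintype n] [Fintype r]
    [DecidableEq r] {A : Matrix m r ℝ} {B : Matrix n r ℝ} (hA : Aᵀ * A = 1) (hB : Bᵀ * B = 1) :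
    ∑ i, ∑ j, ((A * Bᵀ) i j) ^ 2 = Fintype.card r := by
  simp only [sum_sq_apply_eq_mul_transpose_apply]
  change ((A * Bᵀ) * (A * Bᵀ)ᵀ).trace = _
  rw [transpose_mul, transpose_transpose, Matrix.mul_assoc, ← Matrix.mul_assoc Bᵀ, hB,
    Matrix.one_mul, trace_mul_comm, hA, trace_one]

theorem Matrix.trace_diagonal_mul_mul_diagonal_mul_transpose {m n : Type*} [Fintype m]
    [Fintype n] [DecidableEq m] [DecidableEq n] (d : m → ℝ) (e : n → ℝ) (M : Matrix m n ℝ) :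
    (diagonal d * M * diagonal e * Mᵀ).trace = ∑ i, ∑ j, d i * e j * M i j ^ 2 := by
  have h : ∀ i j, (diagonal d * M * diagonal e) i j = d i * M i j * e j := fun i j => by
    rw [mul_diagonal, diagonal_mul]
  simp only [trace, Matrix.diag, mul_apply (M := diagonal d * M * diagonal e), h, transpose_apply]
  exact sum_congr rfl fun i _ => sum_congr rfl fun j _ => by ring

theorem Matrix.trace_conj_diagonal_mul_conj_diagonal {m n p q r : Type*} [Fintype m] [Fintype n]
    [Fintype p] [Fintype q] [Fintype r] [DecidableEq p] [DecidableEq q]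
    (U : Matrix m r ℝ) (V : Matrix n r ℝ) (W : Matrix m p ℝ) (Z : Matrix n q ℝ)
    (d : p → ℝ) (e : q → ℝ) :
    ((Uᵀ * (W * diagonal d * Wᵀ) * U) * (Vᵀ * (Z * diagonal e * Zᵀ) * V)).trace
      = ∑ i, ∑ j, d i * e j * ((Wᵀ * U * (Zᵀ * V)ᵀ) i j) ^ 2 := by
  rw [← trace_diagonal_mul_mul_diagonal_mul_transpose]
  simp only [transpose_mul, transpose_transpose]
  rw [show Uᵀ * (W * diagonal d * Wᵀ) * U * (Vᵀ * (Z * diagonal e * Zᵀ) * V)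
      = (Uᵀ * W) * (diagonal d * Wᵀ * U * Vᵀ * Z * diagonal e * Zᵀ * V) by
    simp only [Matrix.mul_assoc], trace_mul_comm]
  simp only [Matrix.mul_assoc]

end OrthonormalFrames

section Spectrum

theorem Matrix.IsHermitian.exists_eq_mul_diagonal_mul_transpose {n : Type*} [Fintype n]
    [DecidableEq n] {A : Matrix n n ℝ} (hA : A.IsHermitian) :
    ∃ W : Matrix n n ℝ, W * Wᵀ = 1 ∧ A = W * diagonal hA.eigenvalues * Wᵀ := by
  refine ⟨hA.eigenvectorUnitary, ?_, ?_⟩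
  · simpa [star_eq_conjTranspose] using Unitary.mul_star_self_of_mem hA.eigenvectorUnitary.2
  · conv_lhs => rw [hA.spectral_theorem]
    simp [star_eq_conjTranspose]

theorem Polynomial.roots_prod_univ_X_sub_C {ι R : Type*} [Fintype ι] [CommRing R] [IsDomain R]
    (f : ι → R) : (∏ i, (X - C (f i))).roots = univ.val.map f := by
  rw [Finset.prod_eq_multiset_prod, show (fun i => X - C (f i)) = (fun a => X - C a) ∘ f from rfl,
    ← Multiset.map_map, roots_multiset_prod_X_sub_C]

theorem Matrix.IsHermitian.charpoly_conjTranspose_mul_self {n : Type*} [Fintype n]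
    [DecidableEq n] {A : Matrix n n ℝ} (hA : A.IsHermitian) :
    (Aᴴ * A).charpoly = ∏ i, (X - C (hA.eigenvalues i ^ 2)) := by
  obtain ⟨W, hW, hAW⟩ := hA.exists_eq_mul_diagonal_mul_transpose
  have hW' : Wᵀ * W = 1 := mul_eq_one_comm.1 hW
  have hsq : Aᴴ * A = W * (diagonal fun i => hA.eigenvalues i ^ 2) * Wᵀ := by
    conv_lhs => rw [hA.eq, hAW]
    simp only [Matrix.mul_assoc]
    rw [← Matrix.mul_assoc Wᵀ W, hW', Matrix.one_mul, ← Matrix.mul_assoc (diagonal _),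
      diagonal_mul_diagonal]
    simp only [sq]
  rw [hsq, Matrix.mul_assoc, charpoly_mul_comm, Matrix.mul_assoc, hW', Matrix.mul_one,
    charpoly_diagonal]

theorem Matrix.IsHermitian.map_singVals_eq_map_abs_eigenvalues {m : ℕ}
    {P : Matrix (Fin m) (Fin m) ℝ} (hP : P.IsHermitian) :
    univ.val.map (singVals P) = univ.val.map fun i => |hP.eigenvalues i| := by
  have hPP := isHermitian_conjTranspose_mul_self P
  have hroots : univ.val.map hPP.eigenvalues = univ.val.map fun i => hP.eigenvalues i ^ 2 := by
    have h := hPP.roots_charpoly_eq_eigenvalues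
    rw [hP.charpoly_conjTranspose_mul_self, roots_prod_univ_X_sub_C] at h
    simpa using h.symm
  calc univ.val.map (singVals P) = (univ.val.map hPP.eigenvalues).map Real.sqrt := by
        rw [Multiset.map_map]; rfl
    _ = univ.val.map fun i => |hP.eigenvalues i| := by
        rw [hroots, Multiset.map_map]
        simp only [Function.comp_def, Real.sqrt_sq_eq_abs]

theorem exists_perm_eq_comp_of_map_univ_eq {α : Type*} [LinearOrder α] {k : ℕ} {f g : Fin k → α}
    (h : univ.val.map f = univ.val.map g) : ∃ e : Equiv.Perm (Fin k), f = g ∘ e := by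
  have hperm : List.Perm (List.ofFn f) (List.ofFn g) := by
    rwa [← Multiset.coe_eq_coe, ← Fin.univ_val_map, ← Fin.univ_val_map]
  have hsorted : f ∘ Tuple.sort f = g ∘ Tuple.sort g := by
    refine List.ofFn_injective <| List.Perm.eq_of_sortedLE
      (Tuple.monotone_sort f).sortedLE_ofFn (Tuple.monotone_sort g).sortedLE_ofFn ?_
    exact ((Tuple.sort f).ofFn_comp_perm f).trans
      (hperm.trans ((Tuple.sort g).ofFn_comp_perm g).symm)
  refine ⟨(Tuple.sort f).symm.trans (Tuple.sort g), funext fun i => ?_⟩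
  simpa using congr_fun hsorted ((Tuple.sort f).symm i)

theorem Matrix.IsHermitian.exists_perm_abs_eigenvalues_eq {m : ℕ}
    {P : Matrix (Fin m) (Fin m) ℝ} (hP : P.IsHermitian) {σ : Fin m → ℝ}
    (hσ : ∃ e : Equiv.Perm (Fin m), σ = singVals P ∘ e) :
    ∃ g : Equiv.Perm (Fin m), ∀ i, |hP.eigenvalues i| = σ (g i) := by
  obtain ⟨e, rfl⟩ := hσ
  have hmap : univ.val.map (fun i => |hP.eigenvalues i|) = univ.val.map (singVals P ∘ e) := by
    rw [← hP.map_singVals_eq_map_abs_eigenvalues, ← Multiset.map_map, Multiset.map_univ_val_equiv]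
  obtain ⟨g, hg⟩ := exists_perm_eq_comp_of_map_univ_eq hmap
  exact ⟨g, congr_fun hg⟩

end Spectrum

theorem vecr_dotProduct_kroneckerMap_mulVec {m n : ℕ} (P : Matrix (Fin m) (Fin m) ℝ)
    (Q : Matrix (Fin n) (Fin n) ℝ) (S : Matrix (Fin m) (Fin n) ℝ) :
    vecr S ⬝ᵥ ((P ⊗ₖ Q) *ᵥ vecr S) = (Sᵀ * P * S * Qᵀ).trace := by
  have hmulVec : (P ⊗ₖ Q) *ᵥ vecr S = vecr (P * S * Qᵀ) := by
    ext ⟨i, j⟩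
    simp only [mulVec, dotProduct, vecr, kroneckerMap_apply, mul_apply, transpose_apply,
      Fintype.sum_prod_type, sum_mul]
    rw [sum_comm]
    exact sum_congr rfl fun k _ => sum_congr rfl fun l _ => by ring
  have hdot : ∀ T, vecr S ⬝ᵥ vecr T = (Sᵀ * T).trace := fun T => by
    simp only [dotProduct, vecr, trace, Matrix.diag, mul_apply, transpose_apply,
      Fintype.sum_prod_type]
    exact sum_comm
  rw [hmulVec, hdot]
  simp only [Matrix.mul_assoc]

theorem vecr_mul_transpose_dotProduct_kroneckerMap_mulVec {m n r : ℕ}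
    (P : Matrix (Fin m) (Fin m) ℝ) {Q : Matrix (Fin n) (Fin n) ℝ} (hQ : Qᵀ = Q)
    (U : Matrix (Fin m) (Fin r) ℝ) (V : Matrix (Fin n) (Fin r) ℝ) :
    vecr (U * Vᵀ) ⬝ᵥ ((P ⊗ₖ Q) *ᵥ vecr (U * Vᵀ)) = ((Uᵀ * P * U) * (Vᵀ * Q * V)).trace := by
  rw [vecr_dotProduct_kroneckerMap_mulVec, hQ, transpose_mul, transpose_transpose,
    show V * Uᵀ * P * (U * Vᵀ) * Q = V * (Uᵀ * P * U * (Vᵀ * Q)) by simp only [Matrix.mul_assoc],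
    trace_mul_comm]
  simp only [Matrix.mul_assoc]

/-- For a Kronecker-structured symmetric `H = P ⊗ Q` and semi-orthogonal
`U`, `V`, the quadratic form `vec(UVᵀ)ᵀ H vec(UVᵀ)` equals
`trace((Uᵀ P U)(Vᵀ Q V))` and is at most `Σ_{i=1}^r σ_{p,i} σ_{q,i}` where
`σp`, `σq` are the singular values of `P`, `Q` sorted in decreasing order. -/
theorem kronecker_quadratic_form_von_neumann_bound
    {m n r : ℕ} (hrm : r ≤ m) (hrn : r ≤ n)
    (P : Matrix (Fin m) (Fin m) ℝ) (hP : Pᵀ = P)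
    (Q : Matrix (Fin n) (Fin n) ℝ) (hQ : Qᵀ = Q)
    (U : Matrix (Fin m) (Fin r) ℝ) (V : Matrix (Fin n) (Fin r) ℝ)
    (hU : Uᵀ * U = 1) (hV : Vᵀ * V = 1)
    (σp : Fin m → ℝ) (hσp_sort : Antitone σp)
    (hσp : ∃ e : Equiv.Perm (Fin m), σp = singVals P ∘ e)
    (σq : Fin n → ℝ) (hσq_sort : Antitone σq)
    (hσq : ∃ e : Equiv.Perm (Fin n), σq = singVals Q ∘ e) :
    vecr (U * Vᵀ) ⬝ᵥ ((P ⊗ₖ Q) *ᵥ vecr (U * Vᵀ)) =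
      ((Uᵀ * P * U) * (Vᵀ * Q * V)).trace ∧
    vecr (U * Vᵀ) ⬝ᵥ ((P ⊗ₖ Q) *ᵥ vecr (U * Vᵀ)) ≤
      ∑ i : Fin r, σp (Fin.castLE hrm i) * σq (Fin.castLE hrn i) := by
  have hform := vecr_mul_transpose_dotProduct_kroneckerMap_mulVec P hQ U V
  refine ⟨hform, hform ▸ ?_⟩
  have hPH : P.IsHermitian := isHermitian_iff_isSymm.2 hP
  have hQH : Q.IsHermitian := isHermitian_iff_isSymm.2 hQ
  obtain ⟨W, hW, hPW⟩ := hPH.exists_eq_mul_diagonal_mul_transpose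
  obtain ⟨Z, hZ, hQZ⟩ := hQH.exists_eq_mul_diagonal_mul_transpose
  obtain ⟨g, hg⟩ := hPH.exists_perm_abs_eigenvalues_eq hσp
  obtain ⟨h, hh⟩ := hQH.exists_perm_abs_eigenvalues_eq hσq
  have hA := transpose_mul_self_transpose_mul_eq_one hW hU
  have hB := transpose_mul_self_transpose_mul_eq_one hZ hV
  calc ((Uᵀ * P * U) * (Vᵀ * Q * V)).trace
      = ∑ i, ∑ j, hPH.eigenvalues i * hQH.eigenvalues j * ((Wᵀ * U * (Zᵀ * V)ᵀ) i j) ^ 2 := by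
        conv_lhs => rw [hPW, hQZ]
        exact trace_conj_diagonal_mul_conj_diagonal U V W Z _ _
    _ ≤ ∑ i : Fin r, σp (Fin.castLE hrm i) * σq (Fin.castLE hrn i) :=
        sum_sum_mul_mul_le_of_substochastic_of_abs_eq hrm hrn hσp_sort hσq_sort g h hg hh
          (fun _ _ => sq_nonneg _) (sum_row_sq_mul_transpose_le_one hA hB)
          (sum_col_sq_mul_transpose_le_one hA hB)
          ((sum_sum_sq_mul_transpose hA hB).trans_le (by simp))
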